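/- Let A be an abelian category and S a collection of objects of A. Then the smallest thick subcategory of A containing S equals the union over n ≥ 0 of the subcategories th^n(S), where th^0(S) consists of zero objects, th^1(S) = add(S) (direct summands of finite coproducts of objects of S), and th^n(S) consists of direct summands of objects B fitting into a short exact sequence 0 → A → B → C → 0 (in any of the three positions) in which the other two objects lie in th^{n-1}(S). -/

import Mathlib

open CategoryTheory CategoryTheory.Limits

universe v u

variable {C : Type u} [Category.{v} C] [Abelian C]

instance (priority := 100) : HasFiniteBiproducts C :=
  HasFiniteBiproducts.of_hasFiniteProducts

/-- `X` is a retract (direct summand) of `B`. -/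
def IsRetract (X B : C) : Prop := ∃ (s : X ⟶ B) (r : B ⟶ X), s ≫ r = 𝟙 X

/-- A thick subcategory of an abelian category, given by its set of objects:
strictly full, additive (contains zero objects, closed under isomorphisms),
closed under direct summands, and with the two-out-of-three property for
short exact sequences. -/
structure IsThickAb (T : Set C) : Prop where
  mem_of_iso : ∀ {X Y : C}, (X ≅ Y) → X ∈ T → Y ∈ T
  zero_mem : ∀ {X : C}, IsZero X → X ∈ T
  retract_mem : ∀ {X B : C}, IsRetract X B → B ∈ T → X ∈ T
  mem₂ : ∀ (S : ShortComplex C), S.ShortExact → S.X₁ ∈ T → S.X₃ ∈ T → S.X₂ ∈ T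
  mem₁ : ∀ (S : ShortComplex C), S.ShortExact → S.X₂ ∈ T → S.X₃ ∈ T → S.X₁ ∈ T
  mem₃ : ∀ (S : ShortComplex C), S.ShortExact → S.X₁ ∈ T → S.X₂ ∈ T → S.X₃ ∈ T

/-- The smallest thick subcategory of the abelian category `C` containing `S`. -/
def thickClosure (S : Set C) : Set C :=
  {X | ∀ T : Set C, IsThickAb T → S ⊆ T → X ∈ T}

/-- `add S`: direct summands of finite coproducts of objects of `S`. -/
def addHull (S : Set C) : Set C :=
  {X | ∃ (n : ℕ) (f : Fin n → C), (∀ i, f i ∈ S) ∧ IsRetract X (⨁ f)}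

/-- The filtration `th^n(S)` of the thick closure of `S` in an abelian category. -/
def thStep (S : Set C) : ℕ → Set C
  | 0 => {X | IsZero X}
  | 1 => addHull S
  | n + 2 => {X | ∃ SC : ShortComplex C, SC.ShortExact ∧
      ((IsRetract X SC.X₁ ∧ SC.X₂ ∈ thStep S (n + 1) ∧ SC.X₃ ∈ thStep S (n + 1)) ∨
       (IsRetract X SC.X₂ ∧ SC.X₁ ∈ thStep S (n + 1) ∧ SC.X₃ ∈ thStep S (n + 1)) ∨
       (IsRetract X SC.X₃ ∧ SC.X₁ ∈ thStep S (n + 1) ∧ SC.X₂ ∈ thStep S (n + 1)))}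


open ZeroObject

lemma isRetract_refl (X : C) : IsRetract X X := ⟨𝟙 X, 𝟙 X, by simp⟩

lemma isRetract_trans {X Y Z : C} (h₁ : IsRetract X Y) (h₂ : IsRetract Y Z) :
    IsRetract X Z := by
  obtain ⟨s₁, r₁, h₁⟩ := h₁
  obtain ⟨s₂, r₂, h₂⟩ := h₂
  exact ⟨s₁ ≫ s₂, r₂ ≫ r₁, by
    rw [Category.assoc, ← Category.assoc s₂, h₂, Category.id_comp, h₁]⟩

lemma isRetract_of_iso {X Y : C} (e : X ≅ Y) : IsRetract X Y :=
  ⟨e.hom, e.inv, e.hom_inv_id⟩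

/-- The split short exact sequence `0 → X → X → 0 → 0`. -/
noncomputable def idZeroSC (X : C) : ShortComplex C :=
  ShortComplex.mk (𝟙 X) (0 : X ⟶ (0 : C)) (by simp)

lemma idZeroSC_shortExact (X : C) : (idZeroSC X).ShortExact := by
  have s : (idZeroSC X).Splitting :=
    { r := 𝟙 X
      s := 0
      f_r := by simp [idZeroSC]
      s_g := by apply (Limits.isZero_zero C).eq_of_src
      id := by simp [idZeroSC]; erw [zero_comp, add_zero] }
  exact s.shortExact

lemma zero_mem_thStep (S : Set C) : ∀ (n : ℕ) {X : C}, IsZero X → X ∈ thStep S n := by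
  intro n
  induction n with
  | zero => intro X hX; exact hX
  | succ n ih =>
    cases n with
    | zero =>
      intro X hX
      exact ⟨0, Fin.elim0, fun i => i.elim0, 0, 0, hX.eq_of_src _ _⟩
    | succ m =>
      intro X hX
      exact ⟨idZeroSC X, idZeroSC_shortExact X,
        Or.inl ⟨isRetract_refl X, ih hX, ih (Limits.isZero_zero C)⟩⟩

lemma retract_mem_thStep (S : Set C) {X B : C} (h : IsRetract X B) :
    ∀ n, B ∈ thStep S n → X ∈ thStep S n := by
  intro n hB
  match n with
  | 0 =>
    refine zero_mem_thStep S 0 ?_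
    rw [IsZero.iff_id_eq_zero]
    obtain ⟨s, r, hsr⟩ := h
    rw [← hsr, hB.eq_of_src r 0, comp_zero]
  | 1 =>
    obtain ⟨m, f, hf, hret⟩ := hB
    exact ⟨m, f, hf, isRetract_trans h hret⟩
  | (m + 2) =>
    obtain ⟨SC, hSC, hc⟩ := hB
    refine ⟨SC, hSC, ?_⟩
    rcases hc with ⟨hr, h₁, h₂⟩ | ⟨hr, h₁, h₂⟩ | ⟨hr, h₁, h₂⟩
    · exact Or.inl ⟨isRetract_trans h hr, h₁, h₂⟩
    · exact Or.inr (Or.inl ⟨isRetract_trans h hr, h₁, h₂⟩)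
    · exact Or.inr (Or.inr ⟨isRetract_trans h hr, h₁, h₂⟩)

lemma thStep_mono_succ (S : Set C) : ∀ n, thStep S n ⊆ thStep S (n + 1) := by
  intro n X hX
  match n with
  | 0 => exact zero_mem_thStep S 1 hX
  | (m + 1) =>
    exact ⟨idZeroSC X, idZeroSC_shortExact X,
      Or.inl ⟨isRetract_refl X, hX, zero_mem_thStep S (m + 1) (Limits.isZero_zero C)⟩⟩

lemma thStep_mono (S : Set C) {m n : ℕ} (h : m ≤ n) : thStep S m ⊆ thStep S n := by
  induction h with
  | refl => exact subset_rfl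
  | step _ ih => exact ih.trans (thStep_mono_succ S _)

lemma iUnion_thStep_isThick (S : Set C) : IsThickAb (⋃ n : ℕ, thStep S n) := by
  constructor
  · rintro X Y e hX
    obtain ⟨_, ⟨n, rfl⟩, hX⟩ := hX
    exact Set.mem_iUnion.2 ⟨n, retract_mem_thStep S (isRetract_of_iso e.symm) n hX⟩
  · intro X hX
    exact Set.mem_iUnion.2 ⟨0, hX⟩
  · rintro X B h hB
    obtain ⟨_, ⟨n, rfl⟩, hB⟩ := hB
    exact Set.mem_iUnion.2 ⟨n, retract_mem_thStep S h n hB⟩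
  · rintro SC hSC h₁ h₃
    obtain ⟨_, ⟨n₁, rfl⟩, h₁⟩ := h₁
    obtain ⟨_, ⟨n₃, rfl⟩, h₃⟩ := h₃
    refine Set.mem_iUnion.2 ⟨max n₁ n₃ + 2, ⟨SC, hSC, Or.inr (Or.inl
      ⟨isRetract_refl _, ?_, ?_⟩)⟩⟩
    · exact thStep_mono S (le_trans (le_max_left n₁ n₃) (Nat.le_succ _)) h₁
    · exact thStep_mono S (le_trans (le_max_right n₁ n₃) (Nat.le_succ _)) h₃
  · rintro SC hSC h₂ h₃
    obtain ⟨_, ⟨n₂, rfl⟩, h₂⟩ := h₂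
    obtain ⟨_, ⟨n₃, rfl⟩, h₃⟩ := h₃
    refine Set.mem_iUnion.2 ⟨max n₂ n₃ + 2, ⟨SC, hSC, Or.inl
      ⟨isRetract_refl _, ?_, ?_⟩⟩⟩
    · exact thStep_mono S (le_trans (le_max_left n₂ n₃) (Nat.le_succ _)) h₂
    · exact thStep_mono S (le_trans (le_max_right n₂ n₃) (Nat.le_succ _)) h₃
  · rintro SC hSC h₁ h₂
    obtain ⟨_, ⟨n₁, rfl⟩, h₁⟩ := h₁
    obtain ⟨_, ⟨n₂, rfl⟩, h₂⟩ := h₂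
    refine Set.mem_iUnion.2 ⟨max n₁ n₂ + 2, ⟨SC, hSC, Or.inr (Or.inr
      ⟨isRetract_refl _, ?_, ?_⟩)⟩⟩
    · exact thStep_mono S (le_trans (le_max_left n₁ n₂) (Nat.le_succ _)) h₁
    · exact thStep_mono S (le_trans (le_max_right n₁ n₂) (Nat.le_succ _)) h₂

lemma biproduct_mem {T : Set C} (hT : IsThickAb T) :
    ∀ (n : ℕ) (f : Fin n → C), (∀ i, f i ∈ T) → (⨁ f) ∈ T := by
  intro n
  induction n with
  | zero =>
    intro f _
    refine hT.zero_mem ?_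
    rw [IsZero.iff_id_eq_zero]
    ext j
    exact j.elim0
  | succ m ih =>
    intro f hf
    have h2 : (⨁ fun i : Fin m => f i.succ) ∈ T := ih _ fun i => hf i.succ
    have hzero : biproduct.ι f 0 ≫
        biproduct.lift (fun i : Fin m => biproduct.π f i.succ) = 0 := by
      ext i
      simp [biproduct.ι_π, (Fin.succ_ne_zero i).symm]
    have spl : (ShortComplex.mk (biproduct.ι f 0)
        (biproduct.lift (fun i : Fin m => biproduct.π f i.succ)) hzero).Splitting :=
      { r := biproduct.π f 0
        s := biproduct.desc (fun i : Fin m => biproduct.ι f i.succ)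
        f_r := by simp
        s_g := by
          ext i j
          simp [biproduct.ι_π]
        id := by
          ext i j
          rcases i.eq_zero_or_eq_succ with rfl | ⟨i', rfl⟩ <;>
            rcases j.eq_zero_or_eq_succ with rfl | ⟨j', rfl⟩ <;>
            simp [biproduct.lift_desc, Preadditive.comp_sum, Preadditive.sum_comp,
              biproduct.ι_π, biproduct.ι_π_assoc, Fin.succ_ne_zero,
              (Fin.succ_ne_zero _).symm, Fin.succ_inj, dite_comp, comp_dite,
              Finset.sum_dite_eq, Finset.sum_dite_eq'] }
    exact hT.mem₂ _ spl.shortExact (hf 0) h2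


theorem thickClosure_eq_iUnion_thStep (S : Set C) :
    thickClosure S = ⋃ n : ℕ, thStep S n := by
  apply Set.Subset.antisymm
  · intro X hX
    refine hX _ (iUnion_thStep_isThick S) ?_
    intro Y hY
    refine Set.mem_iUnion.2 ⟨1, 1, fun _ => Y, fun _ => hY, ?_⟩
    exact ⟨biproduct.ι (fun _ : Fin 1 => Y) 0, biproduct.π _ 0, biproduct.ι_π_self _ _⟩
  · intro X hX
    obtain ⟨_, ⟨n, rfl⟩, hX⟩ := hX
    intro T hT hST
    induction n generalizing X with
    | zero => exact hT.zero_mem hX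
    | succ m ih =>
      match m with
      | 0 =>
        obtain ⟨k, f, hf, hret⟩ := hX
        exact hT.retract_mem hret (biproduct_mem hT k f fun i => hST (hf i))
      | (l + 1) =>
        obtain ⟨SC, hSC, hc⟩ := hX
        rcases hc with ⟨hr, h₁, h₂⟩ | ⟨hr, h₁, h₂⟩ | ⟨hr, h₁, h₂⟩
        · exact hT.retract_mem hr (hT.mem₁ SC hSC (ih h₁) (ih h₂))
        · exact hT.retract_mem hr (hT.mem₂ SC hSC (ih h₁) (ih h₂))
        · exact hT.retract_mem hr (hT.mem₃ SC hSC (ih h₁) (ih h₂))
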